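/- Fix θ ∈ E. There exists τ₀ > 0 such that for all τ with |τ| < τ₀ the operator id + 2τH(θ) is invertible, and as τ → 0 the gradient of the look-ahead objective coincides to second order with the Levenberg–Marquardt direction for L: ‖∇L_R^τ(θ) − (id + 2τH(θ))⁻¹(∇L(θ))‖ = O(τ²). In particular, a gradient step on L_R^τ agrees, up to O(τ²), with a Levenberg–Marquardt step on L. -/

import Mathlib

/-!
By the chain rule and the symmetry of the Hessian `H`, the gradient of the look-ahead objective
is `(1 - τ H) ∇L(θ - τ g)` with `g = ∇L(θ)`. A Lipschitz Hessian gives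
`∇L(θ - τ g) = g - τ H g + O(τ²)`, and the Neumann series gives
`(1 + 2τ H)⁻¹ = 1 - 2τ H + O(τ²)`, so both sides equal `g - 2τ H g + O(τ²)`.
-/

open Asymptotics Filter RealInnerProductSpace

open InnerProductSpace Topology

section Gradient

variable {𝕜 E F : Type*} [RCLike 𝕜] [NormedAddCommGroup E] [InnerProductSpace 𝕜 E]
  [CompleteSpace E] [NormedAddCommGroup F] [InnerProductSpace 𝕜 F] [CompleteSpace F]

theorem HasGradientAt.comp_hasFDerivAt {f : F → 𝕜} {f' : F} {φ : E → F} {φ' : E →L[𝕜] F}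
    {x : E} (hf : HasGradientAt f f' (φ x)) (hφ : HasFDerivAt φ φ' x) :
    HasGradientAt (f ∘ φ) (ContinuousLinearMap.adjoint φ' f') x := by
  have hdual : toDual 𝕜 E (ContinuousLinearMap.adjoint φ' f') = (toDual 𝕜 F f').comp φ' := by
    ext v
    simp [ContinuousLinearMap.adjoint_inner_left]
  rw [hasGradientAt_iff_hasFDerivAt] at hf ⊢
  rw [hdual]
  exact hf.comp x hφ

end Gradient

section Hessian

variable {E : Type*} [NormedAddCommGroup E] [InnerProductSpace ℝ E] [CompleteSpace E] {f : E → ℝ}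

theorem ContDiff.gradient {m n : WithTop ℕ∞} (hf : ContDiff ℝ n f) (hmn : m + 1 ≤ n) :
    ContDiff ℝ m (gradient f) :=
  (toDual ℝ E).symm.contDiff.comp (hf.fderiv_right hmn)

theorem inner_fderiv_gradient_apply (x v w : E) :
    ⟪fderiv ℝ (gradient f) x v, w⟫ = fderiv ℝ (fderiv ℝ f) x v w := by
  have hgrad : gradient f = (toDual ℝ E).symm ∘ fderiv ℝ f := rfl
  rw [hgrad, LinearIsometryEquiv.comp_fderiv]
  exact toDual_symm_apply

theorem ContDiffAt.isSelfAdjoint_fderiv_gradient {x : E} (hf : ContDiffAt ℝ 2 f x) :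
    IsSelfAdjoint (fderiv ℝ (gradient f) x) := by
  rw [ContinuousLinearMap.isSelfAdjoint_iff_isSymmetric]
  intro v w
  rw [ContinuousLinearMap.coe_coe, inner_fderiv_gradient_apply, real_inner_comm,
    inner_fderiv_gradient_apply]
  exact (hf.isSymmSndFDerivAt (by simp)).eq v w

theorem gradient_comp_sub_smul_gradient (hf : ContDiff ℝ 2 f) (τ : ℝ) (x : E) :
    gradient (fun y => f (y - τ • gradient f y)) x
      = (1 - τ • fderiv ℝ (gradient f) x) (gradient f (x - τ • gradient f x)) := by
  have hgrad : Differentiable ℝ (gradient f) :=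
    (hf.gradient (m := 1) (by norm_num)).differentiable one_ne_zero
  have hstep : HasFDerivAt (fun y => y - τ • gradient f y)
      (1 - τ • fderiv ℝ (gradient f) x) x :=
    (hasFDerivAt_id x).sub ((hgrad x).hasFDerivAt.const_smul τ)
  have hself : IsSelfAdjoint (1 - τ • fderiv ℝ (gradient f) x) :=
    .sub (.one _) (.smul (.all τ) hf.contDiffAt.isSelfAdjoint_fderiv_gradient)
  have h := (hf.differentiable two_ne_zero _).hasGradientAt.comp_hasFDerivAt hstep
  rw [hself.adjoint_eq] at h
  exact h.gradient

end Hessian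

section Taylor

variable {E F : Type*} [NormedAddCommGroup E] [NormedSpace ℝ E] [NormedAddCommGroup F]
  [NormedSpace ℝ F]

theorem LipschitzOnWith.isBigO_sub_sub_fderiv {f : E → F} {f' : E → E →L[ℝ] F} {x : E}
    {K : NNReal} {s : Set E} (hs : s ∈ 𝓝 x) (hf' : LipschitzOnWith K f' s)
    (hf : ∀ y ∈ s, HasFDerivAt f (f' y) y) :
    (fun h => f (x + h) - f x - f' x h) =O[𝓝 0] fun h => ‖h‖ ^ 2 := by
  obtain ⟨ε, hε, hball⟩ := Metric.mem_nhds_iff.1 hs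
  refine IsBigO.of_bound K ?_
  filter_upwards [Metric.ball_mem_nhds 0 hε] with h hh
  rw [mem_ball_zero_iff] at hh
  have hsub : Metric.closedBall x ‖h‖ ⊆ s := (Metric.closedBall_subset_ball hh).trans hball
  have hx : x ∈ Metric.closedBall x ‖h‖ := Metric.mem_closedBall_self (norm_nonneg h)
  have hxh : x + h ∈ Metric.closedBall x ‖h‖ := by simp
  have hbound : ∀ y ∈ Metric.closedBall x ‖h‖, ‖f' y - f' x‖ ≤ K * ‖h‖ := fun y hy =>
    (hf'.norm_sub_le (hsub hy) (hsub hx)).trans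
      (mul_le_mul_of_nonneg_left (mem_closedBall_iff_norm.1 hy) K.2)
  have h := (convex_closedBall x ‖h‖).norm_image_sub_le_of_norm_hasFDerivWithin_le'
    (fun y hy => (hf y (hsub hy)).hasFDerivWithinAt) hbound hx hxh
  simpa [pow_two, mul_assoc] using h

theorem LipschitzOnWith.isBigO_sub_sub_smul_fderiv {f : E → F} {f' : E → E →L[ℝ] F} {x : E}
    {K : NNReal} {s : Set E} (hs : s ∈ 𝓝 x) (hf' : LipschitzOnWith K f' s)
    (hf : ∀ y ∈ s, HasFDerivAt f (f' y) y) (v : E) :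
    (fun τ : ℝ => f (x + τ • v) - f x - τ • f' x v) =O[𝓝 0] fun τ => τ ^ 2 := by
  have hline : Tendsto (fun τ : ℝ => τ • v) (𝓝 0) (𝓝 0) := by
    have hcont : Continuous fun τ : ℝ => τ • v := by fun_prop
    simpa using hcont.tendsto 0
  refine (((hf'.isBigO_sub_sub_fderiv hs hf).comp_tendsto hline).congr_left fun τ => ?_).trans
    (IsBigO.of_bound (‖v‖ ^ 2) (.of_forall fun τ => ?_))
  · simp only [Function.comp_apply, map_smul]
  · simp only [Function.comp_apply, norm_smul, Real.norm_eq_abs, mul_pow, sq_abs, norm_pow]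
    rw [mul_comm, abs_of_nonneg (by positivity)]

end Taylor

section Inverse

variable {𝕜 R : Type*} [NontriviallyNormedField 𝕜] [NormedRing R] [NormedAlgebra 𝕜 R]
  [CompleteSpace R]

theorem eventually_isUnit_one_add_smul (a : R) : ∀ᶠ t : 𝕜 in 𝓝 0, IsUnit (1 + t • a) := by
  have h : Tendsto (fun t : 𝕜 => 1 + t • a) (𝓝 0) (𝓝 1) := by
    have hcont : Continuous fun t : 𝕜 => 1 + t • a := by fun_prop
    simpa using hcont.tendsto 0
  exact h.eventually (Units.isOpen.mem_nhds isUnit_one)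

theorem isBigO_inverse_one_add_smul_sub (a : R) :
    (fun t : 𝕜 => Ring.inverse (1 + t • a) - (1 - t • a)) =O[𝓝 0] fun t => t ^ 2 := by
  have hsmul : Tendsto (fun t : 𝕜 => t • a) (𝓝 0) (𝓝 0) := by
    have hcont : Continuous fun t : 𝕜 => t • a := by fun_prop
    simpa using hcont.tendsto 0
  have h := (NormedRing.inverse_add_norm_diff_second_order (1 : Rˣ)).comp_tendsto hsmul
  simp only [Function.comp_def, Units.val_one, inv_one, one_mul, mul_one] at h
  refine (h.congr_left fun t => by abel).trans (IsBigO.of_bound (‖a‖ ^ 2) ?_)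
  refine Eventually.of_forall fun t => ?_
  simp only [norm_pow, norm_norm]
  rw [← mul_pow]
  gcongr
  exact (norm_smul_le t a).trans_eq (mul_comm _ _)

end Inverse

/-- Fix `θ : E`. If `L` is `C²` and its second derivative (represented as
`θ' ↦ fderiv ℝ (gradient L) θ'`, the Hessian) is Lipschitz on a neighborhood of `θ`, then there
is `τ₀ > 0` such that `id + 2τ H θ` is invertible for `|τ| < τ₀`, and the gradient of the
look-ahead objective agrees with the Levenberg–Marquardt direction up to `O(τ²)`:
`‖∇L_R^τ (θ) - (id + 2τ H θ)⁻¹ (∇L θ)‖ = O(τ²)` as `τ → 0`. -/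
theorem lookahead_gradient_is_levenberg_marquardt
    {E : Type*} [NormedAddCommGroup E] [InnerProductSpace ℝ E] [FiniteDimensional ℝ E]
    (L : E → ℝ) (hL : ContDiff ℝ 2 L) (θ : E)
    (hLip : ∃ K : NNReal, ∃ s ∈ nhds θ,
      LipschitzOnWith K (fun θ' => fderiv ℝ (gradient L) θ') s) :
    ∃ τ₀ : ℝ, 0 < τ₀ ∧
      (∀ τ : ℝ, |τ| < τ₀ →
        IsUnit (ContinuousLinearMap.id ℝ E + (2 * τ) • fderiv ℝ (gradient L) θ)) ∧
      (fun τ : ℝ => gradient (fun θ' => L (θ' - τ • gradient L θ')) θ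
          - Ring.inverse (ContinuousLinearMap.id ℝ E + (2 * τ) • fderiv ℝ (gradient L) θ)
              (gradient L θ))
        =O[nhds 0] (fun τ : ℝ => τ ^ 2) := by
  set H := fderiv ℝ (gradient L) θ
  set g := gradient L θ
  have hdouble : ∀ τ : ℝ, (2 * τ) • H = τ • (2 : ℝ) • H := fun τ => by module
  obtain ⟨τ₀, hτ₀, hunit⟩ :=
    Metric.eventually_nhds_iff.1 (eventually_isUnit_one_add_smul (𝕜 := ℝ) ((2 : ℝ) • H))
  refine ⟨τ₀, hτ₀, fun τ hτ => ?_, ?_⟩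
  · rw [← ContinuousLinearMap.one_def, hdouble]
    exact hunit (by simpa using hτ)
  obtain ⟨K, s, hs, hK⟩ := hLip
  have hgrad : Differentiable ℝ (gradient L) :=
    (hL.gradient (m := 1) (by norm_num)).differentiable one_ne_zero
  have htaylor : (fun τ : ℝ => gradient L (θ - τ • g) - (g - τ • H g)) =O[𝓝 0] fun τ => τ ^ 2 :=
    (hK.isBigO_sub_sub_smul_fderiv hs (fun y _ => (hgrad y).hasFDerivAt) (-g)).congr_left
      fun τ => by simp only [smul_neg, map_neg, ← sub_eq_add_neg]; abel
  have hrem : (fun τ : ℝ => τ • H (gradient L (θ - τ • g) - (g - τ • H g)))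
      =O[𝓝 0] fun τ => τ ^ 2 := by
    simpa using (tendsto_id.isBigO_one ℝ).smul ((H.isBigO_comp _ _).trans htaylor)
  have hquad : (fun τ : ℝ => τ ^ 2 • H (H g)) =O[𝓝 0] fun τ => τ ^ 2 :=
    IsBigO.of_bound ‖H (H g)‖ (.of_forall fun τ => by rw [norm_smul, mul_comm])
  have hinv : (fun τ : ℝ => (Ring.inverse (1 + τ • (2 : ℝ) • H) - (1 - τ • (2 : ℝ) • H)) g)
      =O[𝓝 0] fun τ => τ ^ 2 :=
    ((ContinuousLinearMap.apply ℝ E g).isBigO_comp _ _).trans (isBigO_inverse_one_add_smul_sub _)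
  refine (((htaylor.sub hrem).add hquad).sub hinv).congr_left fun τ => ?_
  rw [gradient_comp_sub_smul_gradient hL, ← ContinuousLinearMap.one_def, hdouble]
  simp only [sub_apply, smul_apply, one_apply_eq_self, map_sub, map_smul]
  module
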